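/- arXiv:1208.5799 — 2 statements merged into one kernel-verified Lean document; each statement's English description precedes it below -/
import Mathlib

section
/- Let H be a Hopf algebra with antipode S and M a right H-Hopf module (a right H-module and right H-comodule with coaction δ_R: M → M ⊗ H, δ_R(m) = Σ m_{(0)} ⊗ m_{(1)}, such that δ_R is a right H-module morphism). Define P: M → M by P(m) = Σ m_{(0)} S(m_{(1)}), and let M^{coR} = {m ∈ M | δ_R(m) = m ⊗ 1} be the set of right coinvariants. Then the maps M → M^{coR} ⊗ H, m ↦ Σ P(m_{(0)}) ⊗ m_{(1)}, and M^{coR} ⊗ H → M, m ⊗ h ↦ mh, are mutually inverse isomorphisms of right H-Hopf modules, where M^{coR} ⊗ H carries the trivial right Hopf module structure (action and coaction on the factor H). -/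
/-!
STATEMENT 1: For a Hopf algebra `H` with antipode `S` and a right `H`-Hopf module `M`,
with `P : M → M`, `P(m) = Σ m₍₀₎ S(m₍₁₎)` (which lands in the coinvariants
`M^{coR} = {m | δ_R m = m ⊗ 1}`), the maps
`M → M^{coR} ⊗ H, m ↦ Σ P(m₍₀₎) ⊗ m₍₁₎` and `M^{coR} ⊗ H → M, m ⊗ h ↦ m·h`
are mutually inverse isomorphisms of right `H`-Hopf modules, where `M^{coR} ⊗ H`
carries the trivial right Hopf module structure.
-/

open TensorProduct

/-- A right Hopf module structure on `M` over the Hopf algebra `H`: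
a right action and a right coaction such that the coaction is a morphism of
right `H`-modules (Hopf compatibility). -/
structure RightHopfModuleStr (K H M : Type) [CommRing K] [Ring H] [HopfAlgebra K H]
    [AddCommGroup M] [Module K M] where
  act : M ⊗[K] H →ₗ[K] M
  coact : M →ₗ[K] M ⊗[K] H
  act_one : ∀ m : M, act (m ⊗ₜ[K] 1) = m
  act_mul : ∀ (m : M) (h h' : H), act (act (m ⊗ₜ[K] h) ⊗ₜ[K] h') = act (m ⊗ₜ[K] (h * h'))
  coact_counit :
    (TensorProduct.rid K M).toLinearMap ∘ₗ
      (LinearMap.lTensor M (Coalgebra.counit (R := K) (A := H))) ∘ₗ coact = LinearMap.id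
  coact_coassoc :
    (LinearMap.lTensor M (Coalgebra.comul (R := K) (A := H))) ∘ₗ coact =
      (TensorProduct.assoc K M H H).toLinearMap ∘ₗ (LinearMap.rTensor H coact) ∘ₗ coact
  compat : coact ∘ₗ act =
      (TensorProduct.map act (LinearMap.mul' K H)) ∘ₗ
        (TensorProduct.tensorTensorTensorComm K M H H H).toLinearMap ∘ₗ
          (TensorProduct.map coact (Coalgebra.comul (R := K) (A := H)))

namespace RightHopfModuleStr

variable {K H M : Type} [CommRing K] [Ring H] [HopfAlgebra K H]
  [AddCommGroup M] [Module K M] (S : RightHopfModuleStr K H M)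

/-- The set of right coinvariants `M^{coR} = {m | δ_R m = m ⊗ 1}`. -/
noncomputable def coinv : Submodule K M :=
  LinearMap.ker (S.coact - (TensorProduct.mk K M H).flip 1)

/-- `P(m) = Σ m₍₀₎ S(m₍₁₎)`. -/
noncomputable def Pmap : M →ₗ[K] M :=
  S.act ∘ₗ (LinearMap.lTensor M (HopfAlgebra.antipode (R := K) (A := H))) ∘ₗ S.coact

/-- `Φ : M → M^{coR} ⊗ H`, `m ↦ Σ P(m₍₀₎) ⊗ m₍₁₎`, given that `P` lands in `M^{coR}`. -/
noncomputable def Phi (hP : ∀ m : M, S.Pmap m ∈ S.coinv) : M →ₗ[K] (S.coinv ⊗[K] H) :=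
  (TensorProduct.map (S.Pmap.codRestrict S.coinv hP) LinearMap.id) ∘ₗ S.coact

/-- `Ψ : M^{coR} ⊗ H → M`, `m ⊗ h ↦ m·h`. -/
noncomputable def Psi : (S.coinv ⊗[K] H) →ₗ[K] M :=
  S.act ∘ₗ (TensorProduct.map S.coinv.subtype LinearMap.id)

/-- The trivial right action on `M^{coR} ⊗ H` (action on the factor `H`). -/
noncomputable def trivAct (h : H) : (S.coinv ⊗[K] H) →ₗ[K] (S.coinv ⊗[K] H) :=
  LinearMap.lTensor S.coinv (LinearMap.mulRight K h)

/-- The trivial right coaction on `M^{coR} ⊗ H` (comultiplication on the factor `H`). -/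
noncomputable def trivCoact : (S.coinv ⊗[K] H) →ₗ[K] ((S.coinv ⊗[K] H) ⊗[K] H) :=
  (TensorProduct.assoc K S.coinv H H).symm.toLinearMap ∘ₗ
    LinearMap.lTensor S.coinv (Coalgebra.comul (R := K) (A := H))

end RightHopfModuleStr

namespace RightHopfModuleStr

variable {K H M : Type} [CommRing K] [Ring H] [HopfAlgebra K H]
  [AddCommGroup M] [Module K M] (S : RightHopfModuleStr K H M)

lemma act_algebraMap (m : M) (c : K) : S.act (m ⊗ₜ[K] (algebraMap K H c)) = c • m := by
  rw [Algebra.algebraMap_eq_smul_one, TensorProduct.tmul_smul, map_smul, S.act_one]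

lemma coact_of_mem_coinv {m : M} (hm : m ∈ S.coinv) : S.coact m = m ⊗ₜ[K] (1 : H) := by
  have : (S.coact - (TensorProduct.mk K M H).flip 1) m = 0 := hm
  rw [LinearMap.sub_apply, sub_eq_zero] at this
  exact this

lemma compat_apply (m : M) (h : H) :
    S.coact (S.act (m ⊗ₜ[K] h)) =
      (TensorProduct.map S.act (LinearMap.mul' K H))
        ((TensorProduct.tensorTensorTensorComm K M H H H)
          ((S.coact m) ⊗ₜ[K] (Coalgebra.comul (R := K) (A := H) h))) := by
  have := LinearMap.congr_fun S.compat (m ⊗ₜ[K] h)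
  simpa using this

/-- `P(m·x) = ε(x) • m` for coinvariant `m`. -/
lemma Pmap_act_of_mem_coinv {m : M} (hm : m ∈ S.coinv) (x : H) :
    S.Pmap (S.act (m ⊗ₜ[K] x)) = (Coalgebra.counit (R := K) (A := H) x) • m := by
  rw [Pmap, LinearMap.comp_apply, LinearMap.comp_apply, S.compat_apply,
    S.coact_of_mem_coinv hm]
  have key : ∀ t : H ⊗[K] H,
      S.act ((LinearMap.lTensor M (HopfAlgebra.antipode (R := K) (A := H)))
        ((TensorProduct.map S.act (LinearMap.mul' K H))
          ((TensorProduct.tensorTensorTensorComm K M H H H)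
            ((m ⊗ₜ[K] (1 : H)) ⊗ₜ[K] t)))) =
      S.act (m ⊗ₜ[K] (LinearMap.mul' K H
        ((LinearMap.lTensor H (HopfAlgebra.antipode (R := K) (A := H))) t))) := by
    intro t
    induction t using TensorProduct.induction_on with
    | zero => simp
    | tmul u v =>
        simp only [TensorProduct.tensorTensorTensorComm_tmul, TensorProduct.map_tmul,
          LinearMap.lTensor_tmul, LinearMap.mul'_apply, one_mul]
        rw [S.act_mul]
    | add a b ha hb => simp only [TensorProduct.tmul_add, map_add, ha, hb]
  rw [key, HopfAlgebra.mul_antipode_lTensor_comul_apply, S.act_algebraMap]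

end RightHopfModuleStr
open RightHopfModuleStr in
theorem rightHopfModule_structure_theorem
    {K H M : Type} [CommRing K] [Ring H] [HopfAlgebra K H]
    [AddCommGroup M] [Module K M] (S : RightHopfModuleStr K H M)
    (hP : ∀ m : M, S.Pmap m ∈ S.coinv) :
    -- mutually inverse
    (S.Psi ∘ₗ S.Phi hP = LinearMap.id) ∧
    (S.Phi hP ∘ₗ S.Psi = LinearMap.id) ∧
    -- `Φ` is a morphism of right `H`-modules (target: trivial structure)
    (∀ (m : M) (h : H), S.Phi hP (S.act (m ⊗ₜ[K] h)) = S.trivAct h (S.Phi hP m)) ∧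
    -- `Φ` is a morphism of right `H`-comodules
    ((LinearMap.rTensor H (S.Phi hP)) ∘ₗ S.coact = S.trivCoact ∘ₗ S.Phi hP) ∧
    -- `Ψ` is a morphism of right `H`-modules
    (∀ (x : S.coinv ⊗[K] H) (h : H), S.Psi (S.trivAct h x) = S.act (S.Psi x ⊗ₜ[K] h)) ∧
    -- `Ψ` is a morphism of right `H`-comodules
    (S.coact ∘ₗ S.Psi = (LinearMap.rTensor H S.Psi) ∘ₗ S.trivCoact) := by
  classical
  have hone : S.Psi ∘ₗ S.Phi hP = LinearMap.id := by
    apply LinearMap.ext; intro m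
    have step1 : S.Psi (S.Phi hP m) =
        S.act ((LinearMap.lTensor M ((LinearMap.mul' K H) ∘ₗ
          (LinearMap.rTensor H (HopfAlgebra.antipode (R := K) (A := H)))))
          ((TensorProduct.assoc K M H H).toLinearMap
            ((LinearMap.rTensor H S.coact) (S.coact m)))) := by
      simp only [Psi, Phi, LinearMap.comp_apply]
      generalize S.coact m = t
      induction t using TensorProduct.induction_on with
      | zero => simp
      | tmul n k =>
          simp only [TensorProduct.map_tmul, LinearMap.rTensor_tmul, LinearMap.id_coe, id_eq,
            Submodule.coe_subtype, LinearMap.codRestrict_apply, LinearEquiv.coe_coe]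
          rw [Pmap]
          simp only [LinearMap.comp_apply]
          generalize S.coact n = u
          induction u using TensorProduct.induction_on with
          | zero => simp
          | tmul a b =>
              simp only [LinearMap.lTensor_tmul, TensorProduct.assoc_tmul,
                LinearMap.comp_apply, LinearMap.rTensor_tmul, LinearMap.mul'_apply,
                LinearEquiv.coe_coe]
              rw [S.act_mul]
          | add a b ha hb => simp only [map_add, TensorProduct.add_tmul, ha, hb]
      | add x y hx hy => simp only [map_add, hx, hy]
    have hco := LinearMap.congr_fun S.coact_coassoc m
    simp only [LinearMap.comp_apply] at hco
    simp only [LinearMap.comp_apply, LinearMap.id_apply]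
    rw [step1, ← hco, ← LinearMap.lTensor_comp_apply,
      LinearMap.comp_assoc, HopfAlgebra.mul_antipode_rTensor_comul,
      LinearMap.lTensor_comp_apply]
    have hrid : ∀ w : M ⊗[K] K,
        S.act ((LinearMap.lTensor M (Algebra.linearMap K H)) w) =
          (TensorProduct.rid K M) w := by
      intro w
      induction w using TensorProduct.induction_on with
      | zero => simp
      | tmul n c =>
          simp only [LinearMap.lTensor_tmul, TensorProduct.rid_tmul]
          exact S.act_algebraMap n c
      | add a b ha hb => simp only [map_add, ha, hb]
    rw [hrid]
    have := LinearMap.congr_fun S.coact_counit m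
    simpa using this
  have htwo : S.Phi hP ∘ₗ S.Psi = LinearMap.id := by
    apply TensorProduct.ext'
    rintro ⟨m, hm⟩ h
    simp only [LinearMap.comp_apply, LinearMap.id_apply, Psi, TensorProduct.map_tmul,
      Submodule.coe_subtype, LinearMap.id_coe, id_eq]
    rw [Phi]
    simp only [LinearMap.comp_apply]
    rw [S.compat_apply, S.coact_of_mem_coinv hm]
    have key : ∀ t : H ⊗[K] H,
        (TensorProduct.map (S.Pmap.codRestrict S.coinv hP) LinearMap.id)
          ((TensorProduct.map S.act (LinearMap.mul' K H))
            ((TensorProduct.tensorTensorTensorComm K M H H H)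
              ((m ⊗ₜ[K] (1 : H)) ⊗ₜ[K] t))) =
        (⟨m, hm⟩ : S.coinv) ⊗ₜ[K]
          ((TensorProduct.lid K H)
            ((LinearMap.rTensor H (Coalgebra.counit (R := K) (A := H))) t)) := by
      intro t
      induction t using TensorProduct.induction_on with
      | zero => simp
      | tmul u v =>
          simp only [TensorProduct.tensorTensorTensorComm_tmul, TensorProduct.map_tmul,
            LinearMap.mul'_apply, one_mul, LinearMap.rTensor_tmul, TensorProduct.lid_tmul,
            LinearMap.id_coe, id_eq]
          have hres : (S.Pmap.codRestrict S.coinv hP) (S.act (m ⊗ₜ[K] u)) =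
              (Coalgebra.counit (R := K) (A := H) u) • (⟨m, hm⟩ : S.coinv) := by
            apply Subtype.ext
            simp only [LinearMap.codRestrict_apply, SetLike.val_smul]
            exact S.Pmap_act_of_mem_coinv hm u
          rw [hres, TensorProduct.smul_tmul]
      | add a b ha hb => simp only [TensorProduct.tmul_add, map_add, ha, hb]
    rw [key, Coalgebra.rTensor_counit_comul]
    simp
  have hfive : ∀ (x : S.coinv ⊗[K] H) (h : H),
      S.Psi (S.trivAct h x) = S.act (S.Psi x ⊗ₜ[K] h) := by
    intro x h
    induction x using TensorProduct.induction_on with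
    | zero => simp
    | tmul n k =>
        simp only [trivAct, Psi, LinearMap.lTensor_tmul, LinearMap.comp_apply,
          TensorProduct.map_tmul, LinearMap.mulRight_apply, Submodule.coe_subtype,
          LinearMap.id_coe, id_eq]
        rw [← S.act_mul]
    | add a b ha hb => simp only [map_add, TensorProduct.add_tmul, ha, hb]
  have hsix : S.coact ∘ₗ S.Psi = (LinearMap.rTensor H S.Psi) ∘ₗ S.trivCoact := by
    apply TensorProduct.ext'
    rintro ⟨m, hm⟩ h
    simp only [LinearMap.comp_apply, trivCoact, Psi, TensorProduct.map_tmul,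
      Submodule.coe_subtype, LinearMap.id_coe, id_eq, LinearMap.lTensor_tmul,
      LinearEquiv.coe_coe]
    rw [S.compat_apply, S.coact_of_mem_coinv hm]
    generalize Coalgebra.comul (R := K) (A := H) h = t
    induction t using TensorProduct.induction_on with
    | zero => simp
    | tmul u v =>
        simp only [TensorProduct.tensorTensorTensorComm_tmul, TensorProduct.map_tmul,
          LinearMap.mul'_apply, one_mul, TensorProduct.assoc_symm_tmul,
          LinearMap.rTensor_tmul, Psi, LinearMap.comp_apply, Submodule.coe_subtype,
          LinearMap.id_coe, id_eq]
    | add a b ha hb => simp only [TensorProduct.tmul_add, map_add, ha, hb]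
  have h1 : ∀ m : M, S.Psi (S.Phi hP m) = m := fun m => LinearMap.congr_fun hone m
  have h2 : ∀ x, S.Phi hP (S.Psi x) = x := fun x => LinearMap.congr_fun htwo x
  have hthree : ∀ (m : M) (h : H),
      S.Phi hP (S.act (m ⊗ₜ[K] h)) = S.trivAct h (S.Phi hP m) := by
    intro m h
    calc S.Phi hP (S.act (m ⊗ₜ[K] h))
        = S.Phi hP (S.act (S.Psi (S.Phi hP m) ⊗ₜ[K] h)) := by rw [h1]
      _ = S.Phi hP (S.Psi (S.trivAct h (S.Phi hP m))) := by rw [hfive]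
      _ = S.trivAct h (S.Phi hP m) := h2 _
  have hfour : (LinearMap.rTensor H (S.Phi hP)) ∘ₗ S.coact = S.trivCoact ∘ₗ S.Phi hP := by
    apply LinearMap.ext; intro m
    simp only [LinearMap.comp_apply]
    conv_lhs => rw [← h1 m]
    have h6 : S.coact (S.Psi (S.Phi hP m)) =
        (LinearMap.rTensor H S.Psi) (S.trivCoact (S.Phi hP m)) :=
      LinearMap.congr_fun hsix _
    rw [h6, ← LinearMap.rTensor_comp_apply, htwo,
      LinearMap.rTensor_id, LinearMap.id_apply]
  exact ⟨hone, htwo, hthree, hfour, hfive, hsix⟩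
end

section
/- Let n = n_1 + n_2. In the group algebra of the braid group 𝔅_n, the total symmetrization element factorizes as Σ_n = (Σ_{τ ∈ 𝔖_{n_1} × 𝔖_{n_2}} T_τ) · (Σ_{σ ∈ 𝔖_{n_1,n_2}} T_σ), where T is the Matsumoto section. Consequently, for any braided vector space (W, σ̃) and any x ∈ W^{⊗n}, if Σ_{σ ∈ 𝔖_{n_1,n_2}} T_σ(x) = 0 then Σ_{ω ∈ 𝔖_n} T_ω(x) = 0; in particular, for the quantum shuffle algebras one has ker S_1 ⊆ ker S_2, and the multiplication induces a surjective linear map S_σ̃(W)_{(1)} ⊗_{S_σ(V)} S_σ̃(W)_{(1)} → S_σ̃(W)_{(2)}. -/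
/-!
Every permutation factors uniquely as `ω = σ * τ` with `σ` increasing on each of the blocks
`[0, n₁)` and `[n₁, n)` and `τ` preserving the two blocks: `τ⁻¹` has to be the permutation that
sorts the values `ω i`, shifted by `n` on the second block. A pair inverted by `τ` lies in one block,
where `σ` inverts nothing, so the lengths add up and the Matsumoto section is multiplicative on
the factorization. Summing over it writes `Σ_n` as a product of the two partial sums (in the
other order after inverting everything), and applying a representation gives the statements
about kernels and images.
-/

noncomputable section

namespace Stmt14

/-- The braid relations on `m` generators `σ_1, …, σ_m`. -/
def braidRels (m : ℕ) : Set (FreeGroup (Fin m)) :=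
  {r | (∃ i j : Fin m, (i : ℕ) + 1 < (j : ℕ) ∧
        r = .of i * .of j * (.of i)⁻¹ * (.of j)⁻¹) ∨
       (∃ i j : Fin m, (i : ℕ) + 1 = (j : ℕ) ∧
        r = .of i * .of j * .of i * (.of j)⁻¹ * (.of i)⁻¹ * (.of j)⁻¹)}

/-- The braid group `𝔅_{m+1}` on `m` generators. -/
def BraidGroup (m : ℕ) := PresentedGroup (braidRels m)

instance (m : ℕ) : Group (BraidGroup m) := inferInstanceAs (Group (PresentedGroup (braidRels m)))

/-- The number of inversions (the length) of a permutation. -/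
def invCount {n : ℕ} (ω : Equiv.Perm (Fin n)) : ℕ :=
  (Finset.univ.filter fun p : Fin n × Fin n => p.1 < p.2 ∧ ω p.2 < ω p.1).card

open Equiv Finset Function

variable {n n1 : ℕ}

def IsShuffle (n1 : ℕ) (σ : Perm (Fin n)) : Prop :=
  (∀ i j : Fin n, (i : ℕ) < (j : ℕ) → (j : ℕ) < n1 → ((σ i : Fin n) : ℕ) < ((σ j : Fin n) : ℕ)) ∧
  (∀ i j : Fin n, (i : ℕ) < (j : ℕ) → n1 ≤ (i : ℕ) → ((σ i : Fin n) : ℕ) < ((σ j : Fin n) : ℕ))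

def PreservesBlocks (n1 : ℕ) (τ : Perm (Fin n)) : Prop :=
  ∀ i : Fin n, ((τ i : ℕ) < n1 ↔ (i : ℕ) < n1)

instance : DecidablePred (IsShuffle (n := n) n1) := fun _ =>
  inferInstanceAs (Decidable (_ ∧ _))

instance : DecidablePred (PreservesBlocks (n := n) n1) := fun _ =>
  inferInstanceAs (Decidable (∀ _, _))

theorem PreservesBlocks.inv {τ : Perm (Fin n)} (hτ : PreservesBlocks n1 τ) :
    PreservesBlocks n1 τ⁻¹ := fun i => by
  simpa using (hτ (τ⁻¹ i)).symm

@[simp]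
theorem preservesBlocks_inv_iff {τ : Perm (Fin n)} :
    PreservesBlocks n1 τ⁻¹ ↔ PreservesBlocks n1 τ :=
  ⟨fun h => inv_inv τ ▸ h.inv, PreservesBlocks.inv⟩

/-- Sorting by this key sorts each block by the values of `σ` and puts the first block first. -/
def blockKey (n1 : ℕ) (σ : Perm (Fin n)) (i : Fin n) : ℕ :=
  (if (i : ℕ) < n1 then 0 else n) + σ i

theorem blockKey_lt_iff {σ : Perm (Fin n)} {i : Fin n} : blockKey n1 σ i < n ↔ (i : ℕ) < n1 := by
  have := (σ i).isLt
  unfold blockKey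
  split_ifs <;> omega

theorem blockKey_injective (σ : Perm (Fin n)) : Injective (blockKey n1 σ) := by
  intro i j h
  have hij : (i : ℕ) < n1 ↔ (j : ℕ) < n1 := by rw [← blockKey_lt_iff, h, blockKey_lt_iff]
  refine σ.injective (Fin.ext ?_)
  unfold blockKey at h
  split_ifs at h <;> omega

theorem blockKey_comp {σ τ : Perm (Fin n)} (hτ : PreservesBlocks n1 τ) :
    blockKey n1 σ ∘ τ = blockKey n1 (σ * τ) := by
  funext i
  simp [blockKey, hτ i]

theorem isShuffle_iff_strictMono_blockKey {σ : Perm (Fin n)} :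
    IsShuffle n1 σ ↔ StrictMono (blockKey n1 σ) := by
  constructor
  · rintro ⟨h₁, h₂⟩ i j hij
    have := (σ i).isLt
    unfold blockKey
    split_ifs with hi hj hj
    · simpa using h₁ i j hij hj
    · omega
    · omega
    · simpa using h₂ i j hij (not_lt.1 hi)
  · intro h
    refine ⟨fun i j hij hj => ?_, fun i j hij hi => ?_⟩
    · simpa [blockKey, hj, hij.trans hj] using h hij
    · simpa [blockKey, not_lt.2 hi, not_lt.2 (hi.trans hij.le)] using h hij

theorem IsShuffle.lt_iff_lt {σ : Perm (Fin n)} (hσ : IsShuffle n1 σ) {a b : Fin n}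
    (hab : (a : ℕ) < n1 ↔ (b : ℕ) < n1) : σ a < σ b ↔ a < b := by
  refine Iff.trans ?_ (isShuffle_iff_strictMono_blockKey.1 hσ).lt_iff_lt
  unfold blockKey
  split_ifs <;> omega

theorem PreservesBlocks.inv_eq_sort {σ τ : Perm (Fin n)} (hσ : IsShuffle n1 σ)
    (hτ : PreservesBlocks n1 τ) : τ⁻¹ = Tuple.sort (blockKey n1 (σ * τ)) := by
  have hkey : blockKey n1 (σ * τ) ∘ ⇑τ⁻¹ = blockKey n1 σ := by
    rw [blockKey_comp hτ.inv, mul_inv_cancel_right]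
  refine Tuple.eq_sort_iff.2 ⟨hkey ▸ (isShuffle_iff_strictMono_blockKey.1 hσ).monotone,
    fun i j hij h => absurd ((blockKey_injective _).comp (τ⁻¹).injective h) hij.ne⟩

theorem exists_isShuffle_mul_preservesBlocks (hn1 : n1 ≤ n) (ω : Perm (Fin n)) :
    ∃ σ τ, IsShuffle n1 σ ∧ PreservesBlocks n1 τ ∧ σ * τ = ω := by
  set π := Tuple.sort (blockKey n1 ω)
  have hsorted : Monotone (blockKey n1 ω ∘ π) := Tuple.monotone_sort _
  have hπ : PreservesBlocks n1 π := by
    intro j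
    have hcard : #{i | (blockKey n1 ω ∘ π) i < n} = n1 := by
      simp only [comp_apply, blockKey_lt_iff]
      rw [card_equiv π (t := {i : Fin n | (i : ℕ) < n1}) (by simp), Fin.card_filter_val_lt,
        min_eq_right hn1]
    have h := Tuple.lt_card_lt_iff_apply_lt_of_monotone (j := j) (a := n) hsorted
    rw [hcard] at h
    exact blockKey_lt_iff.symm.trans h.symm
  refine ⟨ω * π, π⁻¹, ?_, hπ.inv, mul_inv_cancel_right ω π⟩
  rw [isShuffle_iff_strictMono_blockKey, ← blockKey_comp hπ]
  exact hsorted.strictMono_of_injective ((blockKey_injective ω).comp π.injective)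

theorem eq_of_isShuffle_mul_preservesBlocks {σ₁ σ₂ τ₁ τ₂ : Perm (Fin n)}
    (hσ₁ : IsShuffle n1 σ₁) (hσ₂ : IsShuffle n1 σ₂) (hτ₁ : PreservesBlocks n1 τ₁)
    (hτ₂ : PreservesBlocks n1 τ₂) (h : σ₁ * τ₁ = σ₂ * τ₂) : σ₁ = σ₂ ∧ τ₁ = τ₂ := by
  have hτ : τ₁ = τ₂ := inv_injective <| by rw [hτ₁.inv_eq_sort hσ₁, hτ₂.inv_eq_sort hσ₂, h]
  exact ⟨mul_right_cancel (hτ ▸ h), hτ⟩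

theorem invCount_inv (ω : Perm (Fin n)) : invCount ω⁻¹ = invCount ω := by
  refine card_nbij' (fun p => (ω⁻¹ p.2, ω⁻¹ p.1)) (fun p => (ω p.2, ω p.1)) ?_ ?_ ?_ ?_ <;>
    intro p hp <;> simp_all

/-- Cross-block pairs contribute the inversions of `σ`, the others those of `τ`. -/
theorem invCount_mul_of_isShuffle {σ τ : Perm (Fin n)} (hσ : IsShuffle n1 σ)
    (hτ : PreservesBlocks n1 τ) : invCount (σ * τ) = invCount σ + invCount τ := by
  unfold invCount
  rw [← card_filter_add_card_filter_not (p := fun p : Fin n × Fin n => (p.1 : ℕ) < n1 ∧ n1 ≤ p.2)]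
  congr 1
  · refine card_nbij' (fun p => (τ p.1, τ p.2)) (fun p => (τ⁻¹ p.1, τ⁻¹ p.2)) ?_ ?_ ?_ ?_
    · rintro ⟨a, b⟩ hab
      simp only [mem_coe, mem_filter, Finset.mem_univ, true_and] at hab ⊢
      have := hτ a
      have := hτ b
      exact ⟨by omega, hab.1.2⟩
    · rintro ⟨x, y⟩ hxy
      simp only [mem_coe, mem_filter, Finset.mem_univ, true_and] at hxy ⊢
      have hcross : (x : ℕ) < n1 ∧ n1 ≤ y := by
        by_contra h
        exact (hσ.lt_iff_lt (by omega)).1 hxy.2 |>.asymm hxy.1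
      have := hτ.inv x
      have := hτ.inv y
      exact ⟨⟨by omega, by simpa using hxy.2⟩, by omega⟩
    · intro p _; simp
    · intro p _; simp
  · congr 1
    ext ⟨a, b⟩
    simp only [mem_filter, Finset.mem_univ, true_and]
    have := hτ a
    have := hτ b
    constructor
    · rintro ⟨⟨hab, hinv⟩, hcross⟩
      exact ⟨hab, (hσ.lt_iff_lt (by omega)).1 hinv⟩
    · rintro ⟨hab, hinv⟩
      exact ⟨⟨hab, (hσ.lt_iff_lt (by omega)).2 hinv⟩, by omega⟩

theorem invCount_mul_of_isShuffle_inv {σ τ : Perm (Fin n)} (hτ : PreservesBlocks n1 τ)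
    (hσ : IsShuffle n1 σ⁻¹) : invCount (τ * σ) = invCount τ + invCount σ := by
  rw [← invCount_inv, mul_inv_rev, invCount_mul_of_isShuffle hσ hτ.inv, invCount_inv,
    invCount_inv, add_comm]

theorem sum_perm_eq_sum_isShuffle_sum_preservesBlocks {M : Type*} [AddCommMonoid M]
    (hn1 : n1 ≤ n) (f : Perm (Fin n) → M) :
    ∑ ω, f ω = ∑ σ ∈ univ.filter (IsShuffle n1), ∑ τ ∈ univ.filter (PreservesBlocks n1),
      f (σ * τ) := by
  rw [← sum_product']
  symm
  refine sum_bij (fun p _ => p.1 * p.2) (fun _ _ => mem_univ _) ?_ ?_ fun _ _ => rfl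
  · rintro ⟨σ₁, τ₁⟩ h₁ ⟨σ₂, τ₂⟩ h₂ h
    simp only [mem_product, mem_filter, Finset.mem_univ, true_and] at h₁ h₂
    obtain ⟨rfl, rfl⟩ := eq_of_isShuffle_mul_preservesBlocks h₁.1 h₂.1 h₁.2 h₂.2 h
    rfl
  · intro ω _
    obtain ⟨σ, τ, hσ, hτ, rfl⟩ := exists_isShuffle_mul_preservesBlocks hn1 ω
    exact ⟨(σ, τ), by simp [hσ, hτ], rfl⟩

theorem sum_perm_eq_sum_preservesBlocks_sum_isShuffle_inv {M : Type*} [AddCommMonoid M]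
    (hn1 : n1 ≤ n) (f : Perm (Fin n) → M) :
    ∑ ω, f ω = ∑ τ ∈ univ.filter (PreservesBlocks n1),
      ∑ σ ∈ univ.filter (fun σ : Perm (Fin n) => IsShuffle n1 σ⁻¹), f (τ * σ) := by
  calc ∑ ω, f ω = ∑ ω, f ω⁻¹ := (Equiv.sum_comp (Equiv.inv _) f).symm
    _ = ∑ σ ∈ univ.filter (IsShuffle n1), ∑ τ ∈ univ.filter (PreservesBlocks n1),
          f (τ⁻¹ * σ⁻¹) := by
      simp only [sum_perm_eq_sum_isShuffle_sum_preservesBlocks hn1, mul_inv_rev]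
    _ = ∑ τ ∈ univ.filter (PreservesBlocks n1), ∑ σ ∈ univ.filter (IsShuffle n1),
          f (τ⁻¹ * σ⁻¹) := sum_comm
    _ = _ := by
      refine sum_equiv (Equiv.inv _) (by simp) fun τ _ => ?_
      exact sum_equiv (Equiv.inv _) (by simp) fun _ _ => rfl

variable {R : Type*} [Semiring R] {f : Perm (Fin n) → R}

theorem sum_perm_eq_sum_isShuffle_mul_sum_preservesBlocks (hn1 : n1 ≤ n)
    (hf : ∀ σ τ, invCount (σ * τ) = invCount σ + invCount τ → f (σ * τ) = f σ * f τ) :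
    ∑ ω, f ω = (∑ σ ∈ univ.filter (IsShuffle n1), f σ) *
      ∑ τ ∈ univ.filter (PreservesBlocks n1), f τ := by
  rw [sum_perm_eq_sum_isShuffle_sum_preservesBlocks hn1, sum_mul_sum]
  refine sum_congr rfl fun σ hσ => sum_congr rfl fun τ hτ => hf σ τ ?_
  exact invCount_mul_of_isShuffle (mem_filter.1 hσ).2 (mem_filter.1 hτ).2

theorem sum_perm_eq_sum_preservesBlocks_mul_sum_isShuffle_inv (hn1 : n1 ≤ n)
    (hf : ∀ σ τ, invCount (σ * τ) = invCount σ + invCount τ → f (σ * τ) = f σ * f τ) :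
    ∑ ω, f ω = (∑ τ ∈ univ.filter (PreservesBlocks n1), f τ) *
      ∑ σ ∈ univ.filter (fun σ : Perm (Fin n) => IsShuffle n1 σ⁻¹), f σ := by
  rw [sum_perm_eq_sum_preservesBlocks_sum_isShuffle_inv hn1, sum_mul_sum]
  refine sum_congr rfl fun τ hτ => sum_congr rfl fun σ hσ => hf τ σ ?_
  exact invCount_mul_of_isShuffle_inv (mem_filter.1 hτ).2 (mem_filter.1 hσ).2

theorem Module.End.exists_surjective_range_of_eq_mul {R M : Type*} [Semiring R]
    [AddCommMonoid M] [Module R M] {A C S : Module.End R M} (h : S = C * A) :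
    ∃ f : LinearMap.range A →ₗ[R] LinearMap.range S, Surjective f ∧
      ∀ x, f ⟨A x, LinearMap.mem_range_self A x⟩ = ⟨S x, LinearMap.mem_range_self S x⟩ := by
  subst h
  refine ⟨C.restrict fun _ ⟨x, hx⟩ => ⟨x, hx ▸ rfl⟩, ?_, fun x => rfl⟩
  rintro ⟨_, x, rfl⟩
  exact ⟨⟨A x, LinearMap.mem_range_self A x⟩, rfl⟩

open scoped Classical in
theorem total_symmetrizer_factorization
    (K : Type) [CommRing K] (n n1 n2 : ℕ) (hn : n = n1 + n2)
    -- the Matsumoto section `T : 𝔖_n → 𝔅_n`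
    (T : Equiv.Perm (Fin n) → BraidGroup (n - 1))
    -- `T` is multiplicative on length-additive products (Matsumoto's property)
    (hTmul : ∀ τ σ : Equiv.Perm (Fin n),
      invCount (τ * σ) = invCount τ + invCount σ → T (τ * σ) = T τ * T σ) :
    -- (1) factorization `Σ_n = Σ_{𝔖_{n₁} × 𝔖_{n₂}} · Σ_{𝔖_{n₁,n₂}}` in `K[𝔅_n]`
    ((∑ ω : Equiv.Perm (Fin n), MonoidAlgebra.single (T ω) (1 : K)) =
      (∑ τ ∈ Finset.univ.filter
          (fun τ : Equiv.Perm (Fin n) => ∀ i : Fin n, ((τ i : ℕ) < n1 ↔ (i : ℕ) < n1)),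
        MonoidAlgebra.single (T τ) (1 : K)) *
      (∑ σ ∈ Finset.univ.filter
          (fun ω : Equiv.Perm (Fin n) =>
            (∀ i j : Fin n, (i : ℕ) < (j : ℕ) → (j : ℕ) < n1 →
              ((ω⁻¹ i : Fin n) : ℕ) < ((ω⁻¹ j : Fin n) : ℕ)) ∧
            (∀ i j : Fin n, (i : ℕ) < (j : ℕ) → n1 ≤ (i : ℕ) →
              ((ω⁻¹ i : Fin n) : ℕ) < ((ω⁻¹ j : Fin n) : ℕ))),
        MonoidAlgebra.single (T σ) (1 : K))) ∧
    -- (2) for any representation of `𝔅_n` (e.g. on `W^{⊗ n}` for a braided vector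
    -- space `(W, σ̃)`): shuffle-symmetrization kills `x` ⟹ total symmetrization kills `x`
    (∀ (W : Type) (_ : AddCommGroup W) (_ : Module K W)
      (ρ : BraidGroup (n - 1) →* Module.End K W) (x : W),
      (∑ σ ∈ Finset.univ.filter
          (fun ω : Equiv.Perm (Fin n) =>
            (∀ i j : Fin n, (i : ℕ) < (j : ℕ) → (j : ℕ) < n1 →
              ((ω⁻¹ i : Fin n) : ℕ) < ((ω⁻¹ j : Fin n) : ℕ)) ∧
            (∀ i j : Fin n, (i : ℕ) < (j : ℕ) → n1 ≤ (i : ℕ) →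
              ((ω⁻¹ i : Fin n) : ℕ) < ((ω⁻¹ j : Fin n) : ℕ))),
        ρ (T σ)) x = 0 →
      (∑ ω : Equiv.Perm (Fin n), ρ (T ω)) x = 0) ∧
    -- (3) in particular `ker S₁ ⊆ ker S₂` for the component-wise symmetrizer `S₁`
    -- and the total symmetrizer `S₂`, and the multiplication induces a surjection
    -- `S_σ̃(W)_{(1)} ⊗_{S_σ(V)} S_σ̃(W)_{(1)} → S_σ̃(W)_{(2)}`
    (∀ (W : Type) (_ : AddCommGroup W) (_ : Module K W)
      (ρ : BraidGroup (n - 1) →* Module.End K W),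
      LinearMap.ker
          (∑ τ ∈ Finset.univ.filter
            (fun τ : Equiv.Perm (Fin n) => ∀ i : Fin n, ((τ i : ℕ) < n1 ↔ (i : ℕ) < n1)),
            ρ (T τ)) ≤
        LinearMap.ker (∑ ω : Equiv.Perm (Fin n), ρ (T ω)) ∧
      ∃ f : LinearMap.range
            (∑ τ ∈ Finset.univ.filter
              (fun τ : Equiv.Perm (Fin n) => ∀ i : Fin n, ((τ i : ℕ) < n1 ↔ (i : ℕ) < n1)),
              ρ (T τ)) →ₗ[K]
          LinearMap.range (∑ ω : Equiv.Perm (Fin n), ρ (T ω)),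
        Function.Surjective f ∧
        ∀ x : W,
          f ⟨(∑ τ ∈ Finset.univ.filter
              (fun τ : Equiv.Perm (Fin n) => ∀ i : Fin n, ((τ i : ℕ) < n1 ↔ (i : ℕ) < n1)),
              ρ (T τ)) x, LinearMap.mem_range_self _ x⟩ =
            ⟨(∑ ω : Equiv.Perm (Fin n), ρ (T ω)) x, LinearMap.mem_range_self _ x⟩) := by
  have hn1 : n1 ≤ n := hn ▸ Nat.le_add_right n1 n2
  have hρT (W : Type) [AddCommGroup W] [Module K W] (ρ : BraidGroup (n - 1) →* Module.End K W)
      (σ τ : Equiv.Perm (Fin n)) (h : invCount (σ * τ) = invCount σ + invCount τ) :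
      ρ (T (σ * τ)) = ρ (T σ) * ρ (T τ) := by
    rw [hTmul σ τ h, map_mul]
  refine ⟨?_, fun W _ _ ρ x hx => ?_, fun W _ _ ρ => ?_⟩
  · refine sum_perm_eq_sum_preservesBlocks_mul_sum_isShuffle_inv hn1 fun σ τ h => ?_
    rw [hTmul σ τ h, MonoidAlgebra.single_mul_single, one_mul]
  · rw [sum_perm_eq_sum_preservesBlocks_mul_sum_isShuffle_inv hn1 (hρT W ρ),
      Module.End.mul_apply]
    exact (congrArg _ hx).trans (map_zero _)
  · have h := sum_perm_eq_sum_isShuffle_mul_sum_preservesBlocks (f := fun ω => ρ (T ω)) hn1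
      (hρT W ρ)
    exact ⟨h ▸ LinearMap.ker_le_ker_comp _ _, Module.End.exists_surjective_range_of_eq_mul h⟩

end Stmt14
end
end
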